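/- arXiv:2508.04392 — 2 statements merged into one kernel-verified Lean document; each statement's English description precedes it below -/
import Mathlib

section
/- For every q ∈ {1,…,N}, writing s := (N − q)/(N − 1), one has the explicit formula φ((1−q)δ) = (h − δ^μ)·(6s⁵ − 15s⁴ + 10s³ − 1). Moreover, if h ≥ δ^μ, then δ^μ − h ≤ φ((1−q)δ) ≤ 0 for all q ∈ {1,…,N}. -/
/-!
The point `(1 - q)δ` lies on the quintic piece of the cell `j = -1`, i.e. in `[-h + δ, 0]`, where
the rescaled argument is exactly `s = (N - q)/(N - 1)`; so `φ((1 - q)δ) = (h - δ^μ)(P(s) - 1)`.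
The bounds follow from `0 ≤ P ≤ 1` on `[0, 1]`, which comes from the symmetry `P(1 - z) = 1 - P(z)`.
-/

noncomputable section

/-- The smeared-out Heaviside shape function `S(z) = z - sin(2πz)/(2π)`. -/
def Sfun (z : ℝ) : ℝ := z - Real.sin (2 * Real.pi * z) / (2 * Real.pi)

/-- The quintic shape function `P(z) = z³(6z² - 15z + 10)`. -/
def Pfun (z : ℝ) : ℝ := z ^ 3 * (6 * z ^ 2 - 15 * z + 10)

open Set

lemma Pfun_one_sub (z : ℝ) : Pfun (1 - z) = 1 - Pfun z := by
  unfold Pfun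
  ring

lemma Pfun_nonneg {z : ℝ} (hz : 0 ≤ z) : 0 ≤ Pfun z := by
  have hquad : 0 < 6 * z ^ 2 - 15 * z + 10 := by nlinarith [sq_nonneg (z - 5 / 4)]
  unfold Pfun
  positivity

lemma Pfun_le_one {z : ℝ} (hz : z ≤ 1) : Pfun z ≤ 1 := by
  have h := Pfun_nonneg (sub_nonneg.2 hz)
  rw [Pfun_one_sub] at h
  linarith

lemma shift_mem_Icc_quintic_piece {N q δ : ℝ} (hδ : 0 ≤ δ) (hq : 1 ≤ q) (hqN : q ≤ N) :
    (1 - q) * δ ∈ Icc (((-1 : ℤ) : ℝ) * (N * δ) + δ) ((((-1 : ℤ) : ℝ) + 1) * (N * δ)) := by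
  push_cast
  constructor <;> nlinarith

lemma shift_rescaled (N q : ℝ) {δ : ℝ} (hδ : δ ≠ 0) :
    ((1 - q) * δ - ((-1 : ℤ) : ℝ) * (N * δ) - δ) / (N * δ - δ) = (N - q) / (N - 1) := by
  rw [← mul_div_mul_right (N - q) (N - 1) hδ]
  push_cast
  ring_nf

theorem phi_at_shift_general
    (N : ℕ) (δ : ℝ) (hδ : 0 < δ) (μ : ℝ)
    (h : ℝ) (hh : h = (N : ℝ) * δ)
    (φ : ℝ → ℝ)
    (hφP : ∀ j : ℤ, ∀ t ∈ Set.Icc ((j : ℝ) * h + δ) (((j : ℝ) + 1) * h),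
      φ t = (j : ℝ) * h + δ ^ μ + (h - δ ^ μ) * Pfun ((t - (j : ℝ) * h - δ) / (h - δ)))
    :
    ∀ q : ℕ, 1 ≤ q → q ≤ N →
      φ ((1 - (q : ℝ)) * δ) =
        (h - δ ^ μ) *
          (6 * (((N : ℝ) - (q : ℝ)) / ((N : ℝ) - 1)) ^ 5 -
            15 * (((N : ℝ) - (q : ℝ)) / ((N : ℝ) - 1)) ^ 4 +
            10 * (((N : ℝ) - (q : ℝ)) / ((N : ℝ) - 1)) ^ 3 - 1) ∧
      (δ ^ μ ≤ h →
        δ ^ μ - h ≤ φ ((1 - (q : ℝ)) * δ) ∧ φ ((1 - (q : ℝ)) * δ) ≤ 0) := by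
  intro q hq hqN
  subst hh
  have hq' : (1 : ℝ) ≤ q := by exact_mod_cast hq
  have hqN' : (q : ℝ) ≤ N := by exact_mod_cast hqN
  set s : ℝ := ((N : ℝ) - q) / ((N : ℝ) - 1)
  have hs0 : 0 ≤ s := div_nonneg (by linarith) (by linarith)
  have hs1 : s ≤ 1 := div_le_one_of_le₀ (by linarith) (by linarith)
  have hval : φ ((1 - (q : ℝ)) * δ) = (N * δ - δ ^ μ) * (Pfun s - 1) := by
    rw [hφP (-1) _ (shift_mem_Icc_quintic_piece hδ.le hq' hqN'), shift_rescaled _ _ hδ.ne']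
    push_cast
    ring
  refine ⟨by rw [hval]; unfold Pfun; ring, fun hle => ?_⟩
  have hP0 := Pfun_nonneg hs0
  have hP1 := Pfun_le_one hs1
  rw [hval]
  constructor <;> nlinarith

/-- explicit value of φ((1-q)δ) and its bounds. -/
theorem phi_at_shift
    (N : ℕ) (hN : 2 ≤ N) (δ : ℝ) (hδ : 0 < δ) (μ : ℝ) (hμ : 0 < μ)
    (h : ℝ) (hh : h = (N : ℝ) * δ)
    (φ : ℝ → ℝ)
    (hφS : ∀ j : ℤ, ∀ t ∈ Set.Icc ((j : ℝ) * h) ((j : ℝ) * h + δ),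
      φ t = (j : ℝ) * h + δ ^ μ * Sfun ((t - (j : ℝ) * h) / δ))
    (hφP : ∀ j : ℤ, ∀ t ∈ Set.Icc ((j : ℝ) * h + δ) (((j : ℝ) + 1) * h),
      φ t = (j : ℝ) * h + δ ^ μ + (h - δ ^ μ) * Pfun ((t - (j : ℝ) * h - δ) / (h - δ)))
    :
    ∀ q : ℕ, 1 ≤ q → q ≤ N →
      φ ((1 - (q : ℝ)) * δ) =
        (h - δ ^ μ) *
          (6 * (((N : ℝ) - (q : ℝ)) / ((N : ℝ) - 1)) ^ 5 -
            15 * (((N : ℝ) - (q : ℝ)) / ((N : ℝ) - 1)) ^ 4 +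
            10 * (((N : ℝ) - (q : ℝ)) / ((N : ℝ) - 1)) ^ 3 - 1) ∧
      (δ ^ μ ≤ h →
        δ ^ μ - h ≤ φ ((1 - (q : ℝ)) * δ) ∧ φ ((1 - (q : ℝ)) * δ) ≤ 0) :=
  phi_at_shift_general N δ hδ μ h hh φ hφP
end
end

section
/- For any positive reals λ₁,…,λ_d, any q ∈ {1,…,N} and any multi-index 𝐣 ∈ {−1,…,J−1}^d, letting 𝒥_in := {p : 0 ≤ j_p ≤ J−2} and 𝒥₁ := {p : j_p = J−1}, one has a_q^𝐣 = h · Σ_{p∈𝒥_in} λ_p j_p + ( (h + δ^μ)/2 − φ((1−q)δ) ) · Σ_{p∈𝒥_in} λ_p + Σ_{p∈𝒥₁} λ_p. -/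
noncomputable section

/-- The inner function `ψ_q(x) = φ(x + (1-q)δ) - φ((1-q)δ)`. -/
def psi (φ : ℝ → ℝ) (δ : ℝ) (q : ℕ) (x : ℝ) : ℝ :=
  φ (x + (1 - (q : ℝ)) * δ) - φ ((1 - (q : ℝ)) * δ)

/-- The hypercube center coordinate `c_q^j`, with the boundary conventions
`c_q^{-1} = 0` and `c_q^{J-1} = 1`. -/
def center (h δ : ℝ) (J : ℕ) (q : ℕ) (j : ℤ) : ℝ :=
  if j = -1 then 0
  else if j = (J : ℤ) - 1 then 1
  else (j : ℝ) * h + (h + δ) / 2 + ((q : ℝ) - 1) * δ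

/-- The mapped hypercube center `a_q^jv = Ψ_q(𝐜_q^jv) = Σ_p λ_p ψ_q(c_q^{j_p})`. -/
def amap (φ : ℝ → ℝ) (h δ : ℝ) (J : ℕ) {d : ℕ} (lam : Fin d → ℝ)
    (q : ℕ) (jv : Fin d → ℤ) : ℝ :=
  ∑ p, lam p * psi φ δ q (center h δ J q (jv p))

/-!
On each ramp `[jh + δ, (j+1)h]` the function `φ` is the same quintic profile shifted by `jh`
in both variables, so `φ(t + kh) = φ t + kh` there. The offset `(1-q)δ` lies on the ramp
with `j = -1`, which gives `ψ_q(1) = φ((1-q)δ + Jh) - φ((1-q)δ) = Jh = 1`. An interior center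
is shifted by the offset to the midpoint of a ramp, where `P(1/2) = 1/2` evaluates `φ`
exactly.
-/

open Finset

/-- The quintic pieces of the paper's `φ`, with `c` in place of `δ^μ`. -/
def IsQuinticOnRamps (φ : ℝ → ℝ) (h δ c : ℝ) : Prop :=
  ∀ j : ℤ, ∀ t ∈ Set.Icc ((j : ℝ) * h + δ) (((j : ℝ) + 1) * h),
    φ t = (j : ℝ) * h + c + (h - c) * Pfun ((t - (j : ℝ) * h - δ) / (h - δ))

theorem Pfun_one_half : Pfun (1 / 2) = 1 / 2 := by
  norm_num [Pfun]

theorem psi_zero (φ : ℝ → ℝ) (δ : ℝ) (q : ℕ) : psi φ δ q 0 = 0 := by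
  simp [psi]

section Ramps

variable {φ : ℝ → ℝ} {h δ c : ℝ}

theorem IsQuinticOnRamps.add_int_mul (hφ : IsQuinticOnRamps φ h δ c) {j : ℤ} {t : ℝ}
    (ht : t ∈ Set.Icc ((j : ℝ) * h + δ) (((j : ℝ) + 1) * h)) (k : ℤ) :
    φ (t + k * h) = φ t + k * h := by
  have hshift : ((j + k : ℤ) : ℝ) * h = j * h + k * h := by push_cast; ring
  have hmem : t + k * h ∈ Set.Icc (((j + k : ℤ) : ℝ) * h + δ) ((((j + k : ℤ) : ℝ) + 1) * h) := by
    rw [add_one_mul, hshift]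
    constructor <;> linarith [ht.1, ht.2, add_one_mul (j : ℝ) h]
  rw [hφ (j + k) _ hmem, hφ j t ht, hshift]
  ring_nf

theorem IsQuinticOnRamps.apply_midpoint (hφ : IsQuinticOnRamps φ h δ c) (hδh : δ < h)
    (j : ℤ) : φ (j * h + (h + δ) / 2) = j * h + (h + c) / 2 := by
  have hmem : (j : ℝ) * h + (h + δ) / 2 ∈ Set.Icc ((j : ℝ) * h + δ) (((j : ℝ) + 1) * h) := by
    constructor <;> nlinarith
  have hhalf : ((j : ℝ) * h + (h + δ) / 2 - j * h - δ) / (h - δ) = 1 / 2 := by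
    field_simp [(sub_pos.2 hδh).ne']
    ring
  rw [hφ j _ hmem, hhalf, Pfun_one_half]
  ring

theorem IsQuinticOnRamps.psi_one (hφ : IsQuinticOnRamps φ h δ c) {J q : ℕ}
    (hJh : (J : ℝ) * h = 1) (hoff : (1 - (q : ℝ)) * δ ∈ Set.Icc (δ - h) 0) :
    psi φ δ q 1 = 1 := by
  have hramp : (1 - (q : ℝ)) * δ ∈ Set.Icc (((-1 : ℤ) : ℝ) * h + δ) ((((-1 : ℤ) : ℝ) + 1) * h) := by
    push_cast
    constructor <;> linarith [hoff.1, hoff.2]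
  have hshift := hφ.add_int_mul hramp J
  push_cast at hshift
  rw [psi, show 1 + (1 - (q : ℝ)) * δ = (1 - q) * δ + J * h by rw [hJh]; ring, hshift, hJh]
  ring

theorem IsQuinticOnRamps.psi_interior (hφ : IsQuinticOnRamps φ h δ c) (hδh : δ < h)
    (q : ℕ) (j : ℤ) :
    psi φ δ q (j * h + (h + δ) / 2 + ((q : ℝ) - 1) * δ) =
      j * h + ((h + c) / 2 - φ ((1 - (q : ℝ)) * δ)) := by
  have harg : (j : ℝ) * h + (h + δ) / 2 + ((q : ℝ) - 1) * δ + (1 - q) * δ =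
      j * h + (h + δ) / 2 := by ring
  rw [psi, harg, hφ.apply_midpoint hδh j]
  ring

theorem IsQuinticOnRamps.psi_center (hφ : IsQuinticOnRamps φ h δ c) (hδh : δ < h)
    {J q : ℕ} (hJ : 0 < J) (hJh : (J : ℝ) * h = 1)
    (hoff : (1 - (q : ℝ)) * δ ∈ Set.Icc (δ - h) 0) {j : ℤ} (hj : -1 ≤ j ∧ j ≤ (J : ℤ) - 1) :
    psi φ δ q (center h δ J q j) =
      (if 0 ≤ j ∧ j ≤ (J : ℤ) - 2 then j * h + ((h + c) / 2 - φ ((1 - (q : ℝ)) * δ)) else 0) +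
        if j = (J : ℤ) - 1 then 1 else 0 := by
  rcases hj.1.eq_or_lt with rfl | hlo
  · have hne : (-1 : ℤ) ≠ (J : ℤ) - 1 := by omega
    simp [center, hne, psi_zero]
  rcases hj.2.eq_or_lt with rfl | hhi
  · have hne : (J : ℤ) - 1 ≠ -1 := by omega
    have hnint : ¬((0 : ℤ) ≤ J - 1 ∧ (J : ℤ) - 1 ≤ J - 2) := by omega
    rw [center, if_neg hne, if_pos rfl, if_neg hnint, if_pos rfl, hφ.psi_one hJh hoff, zero_add]
  · have hint : 0 ≤ j ∧ j ≤ (J : ℤ) - 2 := by omega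
    simp [center, hlo.ne', hhi.ne, hint, hφ.psi_interior hδh]

end Ramps

theorem sum_mul_ite_add_ite {ι : Type*} (s : Finset ι) (A B : ι → Prop) [DecidablePred A]
    [DecidablePred B] (w x : ι → ℝ) (h C : ℝ) :
    ∑ p ∈ s, w p * ((if A p then x p * h + C else 0) + if B p then 1 else 0) =
      h * ∑ p ∈ s with A p, w p * x p + C * ∑ p ∈ s with A p, w p + ∑ p ∈ s with B p, w p := by
  simp only [mul_add, mul_ite, mul_one, mul_zero, sum_add_distrib, ← sum_filter, mul_sum]
  congr 1
  congr 1 <;> exact sum_congr rfl fun _ _ => by ring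

theorem amap_explicit_formula_general
    (N : ℕ) (hN : 2 ≤ N) (δ : ℝ) (hδ : 0 < δ) (μ : ℝ)
    (h : ℝ) (hh : h = (N : ℝ) * δ)
    (φ : ℝ → ℝ)
    (hφP : ∀ j : ℤ, ∀ t ∈ Set.Icc ((j : ℝ) * h + δ) (((j : ℝ) + 1) * h),
      φ t = (j : ℝ) * h + δ ^ μ + (h - δ ^ μ) * Pfun ((t - (j : ℝ) * h - δ) / (h - δ)))
    (J : ℕ) (hJ : 0 < J) (hJh : (J : ℝ) * h = 1)
    (d : ℕ) (lam : Fin d → ℝ)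
    :
    ∀ q : ℕ, 1 ≤ q → q ≤ N →
      ∀ jv : Fin d → ℤ, (∀ p, -1 ≤ jv p ∧ jv p ≤ (J : ℤ) - 1) →
        amap φ h δ J lam q jv =
          h * (∑ p ∈ Finset.univ.filter (fun p => 0 ≤ jv p ∧ jv p ≤ (J : ℤ) - 2),
                lam p * (jv p : ℝ)) +
          ((h + δ ^ μ) / 2 - φ ((1 - (q : ℝ)) * δ)) *
            (∑ p ∈ Finset.univ.filter (fun p => 0 ≤ jv p ∧ jv p ≤ (J : ℤ) - 2), lam p) +
          ∑ p ∈ Finset.univ.filter (fun p => jv p = (J : ℤ) - 1), lam p := by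
  intro q hq1 hqN jv hjv
  have hN' : (2 : ℝ) ≤ N := by exact_mod_cast hN
  have hq1' : (1 : ℝ) ≤ q := by exact_mod_cast hq1
  have hqN' : (q : ℝ) ≤ N := by exact_mod_cast hqN
  have hδh : δ < h := by rw [hh]; nlinarith
  have hoff : (1 - (q : ℝ)) * δ ∈ Set.Icc (δ - h) 0 := by
    rw [hh]; constructor <;> nlinarith
  have hφ : IsQuinticOnRamps φ h δ (δ ^ μ) := hφP
  simp only [amap, hφ.psi_center hδh hJ hJh hoff (hjv _)]
  exact sum_mul_ite_add_ite _ _ _ _ _ h _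

/-- explicit formula for a_q^jv in terms of interior and rightmost indices. -/
theorem amap_explicit_formula
    (N : ℕ) (hN : 2 ≤ N) (δ : ℝ) (hδ : 0 < δ) (μ : ℝ) (hμ : 0 < μ)
    (h : ℝ) (hh : h = (N : ℝ) * δ)
    (φ : ℝ → ℝ)
    (hφS : ∀ j : ℤ, ∀ t ∈ Set.Icc ((j : ℝ) * h) ((j : ℝ) * h + δ),
      φ t = (j : ℝ) * h + δ ^ μ * Sfun ((t - (j : ℝ) * h) / δ))
    (hφP : ∀ j : ℤ, ∀ t ∈ Set.Icc ((j : ℝ) * h + δ) (((j : ℝ) + 1) * h),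
      φ t = (j : ℝ) * h + δ ^ μ + (h - δ ^ μ) * Pfun ((t - (j : ℝ) * h - δ) / (h - δ)))
    (J : ℕ) (hJ : 0 < J) (hJh : (J : ℝ) * h = 1)
    (d : ℕ) (hd : 2 ≤ d) (lam : Fin d → ℝ) (hlam : ∀ p, 0 < lam p)
    :
    ∀ q : ℕ, 1 ≤ q → q ≤ N →
      ∀ jv : Fin d → ℤ, (∀ p, -1 ≤ jv p ∧ jv p ≤ (J : ℤ) - 1) →
        amap φ h δ J lam q jv =
          h * (∑ p ∈ Finset.univ.filter (fun p => 0 ≤ jv p ∧ jv p ≤ (J : ℤ) - 2),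
                lam p * (jv p : ℝ)) +
          ((h + δ ^ μ) / 2 - φ ((1 - (q : ℝ)) * δ)) *
            (∑ p ∈ Finset.univ.filter (fun p => 0 ≤ jv p ∧ jv p ≤ (J : ℤ) - 2), lam p) +
          ∑ p ∈ Finset.univ.filter (fun p => jv p = (J : ℤ) - 1), lam p :=
  amap_explicit_formula_general N hN δ hδ μ h hh φ hφP J hJ hJh d lam
end
end
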